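/- arXiv:0808.1219 — 9 statements merged into one kernel-verified Lean document; each statement's English description precedes it below -/
import Mathlib

section
/- Let 0 < a < 1 < b, q = sqrt((b-1)/(1-a)), and m ≥ max{q, 1/q}. Then for all t with 0 < t ≤ 1, we have m·t^a − t ≥ t − t^b/m. -/
/-!
Dividing by `t`, the claim reads `m t^(a-1) + t^(b-1) / m ≥ 2`. The tangent-line bound
`t^c ≥ 1 + c log t` turns the left side into at least
`m + 1/m + (log t / m) ((a - 1) m² + (b - 1))`. Here `m + 1/m ≥ 2`, `log t ≤ 0`, and `m ≥ q`
is exactly `(1 - a) m² ≥ b - 1`, so the last term is nonnegative.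
-/

open Real

lemma Real.one_add_mul_log_le_rpow {t : ℝ} (ht : 0 < t) (c : ℝ) : 1 + c * log t ≤ t ^ c := by
  rw [rpow_def_of_pos ht]
  linarith [add_one_le_exp (log t * c)]

lemma two_mul_le_mul_rpow_add_rpow_div {a b m t : ℝ} (hm : 0 < m)
    (hab : b - 1 ≤ (1 - a) * m ^ 2) (ht : 0 < t) (ht1 : t ≤ 1) :
    2 * t ≤ m * t ^ a + t ^ b / m := by
  have hlog : log t ≤ 0 := log_nonpos ht.le ht1
  have hu := one_add_mul_log_le_rpow ht (a - 1)
  have hv := one_add_mul_log_le_rpow ht (b - 1)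
  have hmain : 2 * m ≤ m ^ 2 * t ^ (a - 1) + t ^ (b - 1) := by
    nlinarith [mul_le_mul_of_nonneg_left hu (sq_nonneg m), sq_nonneg (m - 1),
      mul_nonneg (neg_nonneg.mpr hlog) (sub_nonneg.mpr hab)]
  have hsplit (c : ℝ) : t ^ c = t ^ (c - 1) * t := by
    rw [← rpow_add_one ht.ne', sub_add_cancel]
  rw [hsplit a, hsplit b, show m * (t ^ (a - 1) * t) + t ^ (b - 1) * t / m
      = (m ^ 2 * t ^ (a - 1) + t ^ (b - 1)) * t / m by field_simp, le_div_iff₀ hm]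
  nlinarith [mul_le_mul_of_nonneg_right hmain ht.le]

theorem stmt_0_general (a b q m : ℝ) (ha1 : a < 1) (hb : 1 < b)
    (hq : q = Real.sqrt ((b - 1) / (1 - a))) (hm : max q q⁻¹ ≤ m) :
    ∀ t : ℝ, 0 < t → t ≤ 1 → m * t ^ a - t ≥ t - t ^ b / m := by
  intro t ht ht1
  have hqm : q ≤ m := le_of_max_le_left hm
  have hq_pos : 0 < q := hq ▸ sqrt_pos.mpr (div_pos (by linarith) (by linarith))
  have hab : b - 1 ≤ (1 - a) * m ^ 2 :=
    (div_le_iff₀' (by linarith)).mp (sqrt_le_iff.mp (hq ▸ hqm)).2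
  linarith [two_mul_le_mul_rpow_add_rpow_div (hq_pos.trans_le hqm) hab ht ht1]

theorem stmt_0 (a b q m : ℝ) (ha0 : 0 < a) (ha1 : a < 1) (hb : 1 < b)
    (hq : q = Real.sqrt ((b - 1) / (1 - a))) (hm : max q q⁻¹ ≤ m) :
    ∀ t : ℝ, 0 < t → t ≤ 1 → m * t ^ a - t ≥ t - t ^ b / m :=
  stmt_0_general a b q m ha1 hb hq hm
end

section
/- Let 0 < a < 1 < b, q = sqrt((b-1)/(1-a)), and m ≥ max{q, 1/q}. Then for all t ≥ 1, we have m·t^b − t ≥ t − t^a/m. -/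
/-!
Writing `t ^ c = t * exp ((c - 1) * log t)` and using `1 + x ≤ exp x` gives, for `t > 0`,
`t ^ b - t ≥ (b - 1) t log t` and `t - t ^ a ≤ (1 - a) t log t`, hence
`q ^ 2 (t - t ^ a) ≤ t ^ b - t`. Since `m q ≥ 1` and `t - t ^ a ≥ 0` for `t ≥ 1`, this yields
`m ^ 2 (t ^ b - t) ≥ t - t ^ a`. Multiplied by `m`, the claim reads
`m ^ 2 t ^ b - 2 m t + t ^ a ≥ 0`, and its left side is at least `t (m - 1) ^ 2`.
-/

open Real

lemma mul_mul_log_le_rpow_sub {t : ℝ} (ht : 0 < t) (c : ℝ) :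
    (c - 1) * (t * log t) ≤ t ^ c - t := by
  have hpow : t ^ c = t * exp ((c - 1) * log t) := by
    rw [rpow_def_of_pos ht, ← exp_log ht, ← exp_add, log_exp]
    ring_nf
  have := mul_le_mul_of_nonneg_left (add_one_le_exp ((c - 1) * log t)) ht.le
  rw [hpow]
  linarith

lemma mul_sub_rpow_le_mul_rpow_sub {a b t : ℝ} (ha : a ≤ 1) (hb : 1 ≤ b) (ht : 0 < t) :
    (b - 1) * (t - t ^ a) ≤ (1 - a) * (t ^ b - t) := by
  have hlower := mul_le_mul_of_nonneg_left (mul_mul_log_le_rpow_sub ht b)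
    (sub_nonneg.mpr ha)
  have hupper := mul_le_mul_of_nonneg_left (mul_mul_log_le_rpow_sub ht a)
    (sub_nonneg.mpr hb)
  nlinarith

theorem stmt_1_general (a b q m : ℝ) (ha1 : a < 1) (hb : 1 < b)
    (hq : q = Real.sqrt ((b - 1) / (1 - a))) (hm : max q q⁻¹ ≤ m) :
    ∀ t : ℝ, 1 ≤ t → m * t ^ b - t ≥ t - t ^ a / m := by
  intro t ht
  have hqpos : 0 < q := hq ▸ sqrt_pos.mpr (div_pos (by linarith) (by linarith))
  have hq_sq : q ^ 2 * (1 - a) = b - 1 := by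
    rw [hq, sq_sqrt (div_pos (by linarith) (by linarith)).le,
      div_mul_cancel₀ _ (by linarith)]
  have hmq : 1 ≤ m * q := by
    simpa [hqpos.ne'] using mul_le_mul_of_nonneg_right (le_of_max_le_right hm) hqpos.le
  have hm0 : 0 < m := pos_of_mul_pos_left (one_pos.trans_le hmq) hqpos.le
  have hta : t ^ a ≤ t := by
    simpa using rpow_le_rpow_of_exponent_le ht ha1.le
  have hkey : q ^ 2 * (t - t ^ a) ≤ t ^ b - t := by
    have := mul_sub_rpow_le_mul_rpow_sub ha1.le hb.le (one_pos.trans_le ht)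
    rw [← hq_sq] at this
    nlinarith
  have hsq : t - t ^ a ≤ m ^ 2 * (t ^ b - t) := by
    nlinarith [mul_le_mul_of_nonneg_left hkey (sq_nonneg m), one_le_pow₀ (n := 2) hmq]
  rw [ge_iff_le, ← sub_nonneg]
  have hsplit : m * t ^ b - t - (t - t ^ a / m)
      = (m ^ 2 * (t ^ b - t) - (t - t ^ a) + t * (m - 1) ^ 2) / m := by
    field_simp
    ring
  rw [hsplit]
  have := mul_nonneg (one_pos.trans_le ht).le (sq_nonneg (m - 1))
  exact div_nonneg (by linarith) hm0.le

theorem stmt_1 (a b q m : ℝ) (ha0 : 0 < a) (ha1 : a < 1) (hb : 1 < b)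
    (hq : q = Real.sqrt ((b - 1) / (1 - a))) (hm : max q q⁻¹ ≤ m) :
    ∀ t : ℝ, 1 ≤ t → m * t ^ b - t ≥ t - t ^ a / m :=
  stmt_1_general a b q m ha1 hb hq hm
end

section
/- Let n ≥ 2, K > 1, α = K^(1/(1−n)), β = 1/α, and c = sqrt(β). Then for all t ∈ (0,1): c·t^α − t ≥ t − t^β/c. -/
/-!
Put `c = √β` and `u = t ^ (1 - α)`. Since `α β = 1`, `t ^ α = t / u` and `t ^ β = t u ^ β`, so the
claim is `c / u + u ^ β / c ≥ 2`. Bernoulli's inequality `u ^ β ≥ 1 + β (u - 1)` reduces this to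
`β (1 - u) ^ 2 + u (c - 1) ^ 2 ≥ 0`.
-/

open Real

theorem two_le_sqrt_div_add_rpow_div_sqrt {p u : ℝ} (hp : 1 ≤ p) (hu : 0 < u) :
    2 ≤ √p / u + u ^ p / √p := by
  have hc : 0 < √p := sqrt_pos.2 (by linarith)
  have hc_sq : √p ^ 2 = p := sq_sqrt (by linarith)
  have bernoulli : 1 + p * (u - 1) ≤ u ^ p := by
    simpa using one_add_mul_self_le_rpow_one_add (s := u - 1) (by linarith) hp
  rw [div_add_div _ _ hu.ne' hc.ne', le_div_iff₀ (by positivity)]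
  calc 2 * (u * √p)
      ≤ 2 * (u * √p) + (p * (1 - u) ^ 2 + u * (√p - 1) ^ 2) :=
        le_add_of_nonneg_right (by have := hu.le; positivity)
    _ = √p * √p + u * (1 + p * (u - 1)) := by linear_combination (u - 1) * hc_sq
    _ ≤ √p * √p + u * u ^ p := by gcongr

theorem two_mul_le_sqrt_mul_rpow_add_rpow_div_sqrt {α β t : ℝ} (hβ : 1 ≤ β) (hαβ : α * β = 1)
    (ht : 0 < t) : 2 * t ≤ √β * t ^ α + t ^ β / √β := by
  set u := t ^ (1 - α)
  have hu : 0 < u := rpow_pos_of_pos ht _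
  have ht_α : t ^ α = t / u := by
    rw [eq_div_iff hu.ne', ← rpow_add ht, add_sub_cancel, rpow_one]
  have ht_β : t ^ β = t * u ^ β := by
    have hβ_eq : β = 1 + (1 - α) * β := by linear_combination hαβ
    rw [← rpow_mul ht.le]
    nth_rw 1 [hβ_eq]
    rw [rpow_add ht, rpow_one]
  rw [ht_α, ht_β]
  calc 2 * t = t * 2 := mul_comm _ _
    _ ≤ t * (√β / u + u ^ β / √β) :=
        mul_le_mul_of_nonneg_left (two_le_sqrt_div_add_rpow_div_sqrt hβ hu) ht.le
    _ = √β * (t / u) + t * u ^ β / √β := by ring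

theorem stmt_2 (n : ℕ) (K α β c : ℝ) (hn : 2 ≤ n) (hK : 1 < K)
    (hα : α = K ^ ((1 : ℝ) / (1 - (n : ℝ)))) (hβ : β = 1 / α)
    (hc : c = Real.sqrt β) :
    ∀ t : ℝ, 0 < t → t < 1 → c * t ^ α - t ≥ t - t ^ β / c := by
  intro t ht _
  have hexp : (1 : ℝ) / (1 - n) < 0 := by
    have : (2 : ℝ) ≤ n := by exact_mod_cast hn
    exact div_neg_of_pos_of_neg one_pos (by linarith)
  have hα_pos : 0 < α := hα ▸ rpow_pos_of_pos (by linarith) _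
  have hα_lt : α < 1 := hα ▸ rpow_lt_one_of_one_lt_of_neg hK hexp
  have hβ_ge : 1 ≤ β := hβ ▸ (one_le_div hα_pos).2 hα_lt.le
  have hαβ : α * β = 1 := by rw [hβ, mul_one_div_cancel hα_pos.ne']
  have := two_mul_le_sqrt_mul_rpow_add_rpow_div_sqrt hβ_ge hαβ ht
  rw [← hc] at this
  linarith
end

section
/- Let n ≥ 2, K > 1, α = K^(1/(1−n)), β = 1/α, and c = sqrt(β). Then for all t > 1: c·t^β − t ≥ t − t^α/c. -/
/-!
Since `α β = 1`, AM-GM gives `α + β ≥ 2`. AM-GM applied once more, to `c t^β` and `t^α / c`,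
bounds their sum below by `2 t^((α + β)/2)`, whatever `c > 0` is, and `t^((α + β)/2) ≥ t` for `t ≥ 1`.
-/

lemma two_le_add_one_div_self {a : ℝ} (ha : 0 < a) : 2 ≤ a + 1 / a := by
  rw [show a + 1 / a = (a ^ 2 + 1) / a by field_simp, le_div_iff₀ ha]
  nlinarith [sq_nonneg (a - 1)]

lemma two_mul_rpow_half_add_le {t c : ℝ} (ht : 0 < t) (hc : 0 < c) (a b : ℝ) :
    2 * t ^ ((a + b) / 2) ≤ c * t ^ b + t ^ a / c := by
  set u := t ^ (a / 2)
  set w := t ^ (b / 2)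
  have hu : t ^ a = u ^ 2 := by rw [← Real.rpow_natCast, ← Real.rpow_mul ht.le]; norm_num
  have hw : t ^ b = w ^ 2 := by rw [← Real.rpow_natCast, ← Real.rpow_mul ht.le]; norm_num
  have huw : t ^ ((a + b) / 2) = u * w := by rw [← Real.rpow_add ht]; ring_nf
  rw [hu, hw, huw, ← sub_nonneg]
  have : c * w ^ 2 + u ^ 2 / c - 2 * (u * w) = (c * w - u) ^ 2 / c := by field_simp; ring
  rw [this]
  positivity

theorem stmt_3_general (n : ℕ) (K α β c : ℝ) (hK : 1 < K)
    (hα : α = K ^ ((1 : ℝ) / (1 - (n : ℝ)))) (hβ : β = 1 / α)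
    (hc : c = Real.sqrt β) :
    ∀ t : ℝ, 1 < t → c * t ^ β - t ≥ t - t ^ α / c := by
  intro t ht
  have hα0 : 0 < α := hα ▸ Real.rpow_pos_of_pos (by linarith) _
  have hc0 : 0 < c := hc ▸ Real.sqrt_pos.mpr (hβ ▸ one_div_pos.mpr hα0)
  have hsum : 2 ≤ α + β := hβ ▸ two_le_add_one_div_self hα0
  have hamgm := two_mul_rpow_half_add_le (by linarith) hc0 α β
  have hexp : t ≤ t ^ ((α + β) / 2) := Real.self_le_rpow_of_one_le ht.le (by linarith)
  linarith

theorem stmt_3 (n : ℕ) (K α β c : ℝ) (hn : 2 ≤ n) (hK : 1 < K)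
    (hα : α = K ^ ((1 : ℝ) / (1 - (n : ℝ)))) (hβ : β = 1 / α)
    (hc : c = Real.sqrt β) :
    ∀ t : ℝ, 1 < t → c * t ^ β - t ≥ t - t ^ α / c :=
  stmt_3_general n K α β c hK hα hβ hc
end

section
/- For b ≥ 1 and all t > 0, log(1+t^b)/(log(1+t))^b ≤ (log 2)^(1−b), with equality at t = 1. -/
/-!
Substitute `t = exp s`. Then `h s = log (log (1 + exp s))` is concave: its derivative
`exp s / ((1 + exp s) * log (1 + exp s))` is antitone because `log (1 + x) ≤ x`.
Since `s` is the convex combination `(1/b) • (b * s) + (1 - 1/b) • 0`, concavity gives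
`h (b * s) ≤ b * h s + (1 - b) * h 0`, and exponentiating this is the inequality, as
`exp (h 0) = log 2`.
-/

open Real Set

theorem ConcaveOn.apply_mul_le_of_one_le {h : ℝ → ℝ} (hh : ConcaveOn ℝ univ h) {b : ℝ}
    (hb : 1 ≤ b) (s : ℝ) : h (b * s) ≤ b * h s + (1 - b) * h 0 := by
  have hb0 : 0 < b := by linarith
  have hcomb := hh.2 (mem_univ (b * s)) (mem_univ 0) (by positivity : 0 ≤ 1 / b)
    (by rw [sub_nonneg, div_le_one hb0]; exact hb) (add_sub_cancel _ _)
  have hs : (1 / b) • (b * s) + (1 - 1 / b) • (0 : ℝ) = s := by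
    rw [smul_zero, add_zero, smul_eq_mul, one_div, inv_mul_cancel_left₀ hb0.ne']
  rw [hs, smul_eq_mul, smul_eq_mul] at hcomb
  calc h (b * s) = b * (1 / b * h (b * s) + (1 - 1 / b) * h 0) + (1 - b) * h 0 := by
        field_simp; ring
    _ ≤ b * h s + (1 - b) * h 0 := by gcongr

lemma log_one_add_exp_pos (s : ℝ) : 0 < log (1 + exp s) :=
  log_pos (lt_add_of_pos_right 1 (exp_pos s))

lemma hasDerivAt_log_one_add_exp (s : ℝ) :
    HasDerivAt (fun s => log (1 + exp s)) (exp s / (1 + exp s)) s :=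
  ((hasDerivAt_exp s).const_add 1).log (by positivity)

lemma hasDerivAt_log_log_one_add_exp (s : ℝ) :
    HasDerivAt (fun s => log (log (1 + exp s))) (exp s / ((1 + exp s) * log (1 + exp s))) s := by
  simpa only [div_div] using (hasDerivAt_log_one_add_exp s).log (log_one_add_exp_pos s).ne'

lemma antitone_exp_div_mul_log_one_add_exp :
    Antitone fun s => exp s / ((1 + exp s) * log (1 + exp s)) := by
  have hD : ∀ s, HasDerivAt (fun s => (1 + exp s) * log (1 + exp s))
      (exp s * log (1 + exp s) + exp s) s := fun s => by
    refine (((hasDerivAt_exp s).const_add 1).mul (hasDerivAt_log_one_add_exp s)).congr_deriv ?_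
    rw [mul_div_cancel₀ _ (by positivity : 1 + exp s ≠ 0)]
  have hg : ∀ s, HasDerivAt (fun s => exp s / ((1 + exp s) * log (1 + exp s)))
      (exp s * (log (1 + exp s) - exp s) / ((1 + exp s) * log (1 + exp s)) ^ 2) s := fun s => by
    refine ((hasDerivAt_exp s).div (hD s)
      (by have := log_one_add_exp_pos s; positivity)).congr_deriv ?_
    ring
  refine antitone_of_deriv_nonpos (fun s => (hg s).differentiableAt) fun s => ?_
  have hlog : log (1 + exp s) ≤ exp s := by
    linarith [log_le_sub_one_of_pos (by positivity : 0 < 1 + exp s)]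
  rw [(hg s).deriv]
  exact div_nonpos_of_nonpos_of_nonneg
    (mul_nonpos_of_nonneg_of_nonpos (exp_pos s).le (by linarith)) (sq_nonneg _)

theorem concaveOn_log_log_one_add_exp : ConcaveOn ℝ univ fun s => log (log (1 + exp s)) := by
  refine Antitone.concaveOn_univ_of_deriv
    (fun s => (hasDerivAt_log_log_one_add_exp s).differentiableAt) ?_
  rw [funext fun s => (hasDerivAt_log_log_one_add_exp s).deriv]
  exact antitone_exp_div_mul_log_one_add_exp

theorem stmt_9 (b : ℝ) (hb : 1 ≤ b) :
    (∀ t : ℝ, 0 < t →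
      Real.log (1 + t ^ b) / Real.log (1 + t) ^ b ≤ Real.log 2 ^ (1 - b)) ∧
    Real.log (1 + (1 : ℝ) ^ b) / Real.log (1 + 1) ^ b = Real.log 2 ^ (1 - b) := by
  have hlog2 : 0 < log 2 := log_pos one_lt_two
  refine ⟨fun t ht => ?_, by rw [one_rpow, one_add_one_eq_two, rpow_sub hlog2, rpow_one]⟩
  have hlogt : 0 < log (1 + t) := log_pos (lt_add_of_pos_right 1 ht)
  have hexp : ∀ s, log (1 + exp s) = exp (log (log (1 + exp s))) := fun s =>
    (exp_log (log_one_add_exp_pos s)).symm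
  rw [div_le_iff₀ (rpow_pos_of_pos hlogt b), rpow_def_of_pos ht, hexp, rpow_def_of_pos hlog2,
    rpow_def_of_pos hlogt, ← exp_add, exp_le_exp, mul_comm (log t)]
  have key := concaveOn_log_log_one_add_exp.apply_mul_le_of_one_le hb (log t)
  rw [exp_log ht, exp_zero, one_add_one_eq_two] at key
  linarith
end

section
/- Let 0 < a ≤ 1 ≤ b, φ(t) = max{t^a, t^b}, and c > 1. Then for 0 < t < 1: log(1 + c·φ(t)) ≤ c·(log(1+t))^a. -/
/-!
For `0 < t < 1` we have `φ t = t ^ a`, and Bernoulli's inequality `1 + c x ≤ (1 + x) ^ c` pulls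
the factor `c` out of the logarithm. It remains to see `log (1 + t ^ a) ≤ log (1 + t) ^ a`.
Write `u = t ^ a` and `L = log (1 + u)`. Bernoulli's inequality with exponent `t ^ (1 - a) ≤ 1`
gives `t ^ (1 - a) * L ≤ log (1 + t)`, while `L ≤ u`; hence
`L = L ^ a * L ^ (1 - a) ≤ L ^ a * u ^ (1 - a) = (t ^ (1 - a) * L) ^ a ≤ log (1 + t) ^ a`.
-/

open Real

lemma log_one_add_mul_le_mul_log_one_add {x c : ℝ} (hx : 0 ≤ x) (hc : 1 ≤ c) :
    log (1 + c * x) ≤ c * log (1 + x) := by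
  rw [← log_rpow (by linarith)]
  exact log_le_log (by nlinarith) (one_add_mul_self_le_rpow_one_add (by linarith) hc)

lemma rpow_one_sub_mul_log_one_add_rpow_le {t a : ℝ} (ht0 : 0 < t) (ht1 : t ≤ 1) (ha : a ≤ 1) :
    t ^ (1 - a) * log (1 + t ^ a) ≤ log (1 + t) := by
  have hu : 0 < 1 + t ^ a := by positivity
  have hmul : t ^ (1 - a) * t ^ a = t := by rw [← rpow_add ht0]; norm_num
  have hbernoulli : (1 + t ^ a) ^ t ^ (1 - a) ≤ 1 + t :=
    calc _ ≤ 1 + t ^ (1 - a) * t ^ a := rpow_one_add_le_one_add_mul_self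
            (by linarith) (rpow_nonneg ht0.le _)
            (rpow_le_one ht0.le ht1 (by linarith))
      _ = 1 + t := by rw [hmul]
  rw [← log_rpow hu]
  exact log_le_log (rpow_pos_of_pos hu _) hbernoulli

lemma log_one_add_rpow_le_rpow_log_one_add {t a : ℝ} (ht0 : 0 < t) (ht1 : t ≤ 1) (ha0 : 0 ≤ a)
    (ha1 : a ≤ 1) : log (1 + t ^ a) ≤ log (1 + t) ^ a := by
  set u := t ^ a with hu_def
  set L := log (1 + u)
  have hu : 0 < u := rpow_pos_of_pos ht0 a
  have hL : 0 < L := log_pos (by linarith)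
  have hLu : L ≤ u := by linarith [log_le_sub_one_of_pos (by linarith : 0 < 1 + u)]
  calc L = L ^ a * L ^ (1 - a) := by rw [← rpow_add hL]; norm_num
    _ ≤ L ^ a * u ^ (1 - a) := by gcongr
    _ = (t ^ (1 - a) * L) ^ a := by
        rw [mul_rpow (rpow_nonneg ht0.le _) hL.le, hu_def, ← rpow_mul ht0.le,
          ← rpow_mul ht0.le, mul_comm a, mul_comm]
    _ ≤ log (1 + t) ^ a := by
        gcongr
        exact rpow_one_sub_mul_log_one_add_rpow_le ht0 ht1 ha1

theorem stmt_12 (a b c : ℝ) (ha0 : 0 < a) (ha1 : a ≤ 1) (hb : 1 ≤ b) (hc : 1 < c)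
    (φ : ℝ → ℝ) (hφ : ∀ t : ℝ, φ t = max (t ^ a) (t ^ b)) :
    ∀ t : ℝ, 0 < t → t < 1 →
      Real.log (1 + c * φ t) ≤ c * Real.log (1 + t) ^ a := by
  intro t ht0 ht1
  rw [hφ, max_eq_left (rpow_le_rpow_of_exponent_ge ht0 ht1.le (ha1.trans hb))]
  calc log (1 + c * t ^ a) ≤ c * log (1 + t ^ a) :=
        log_one_add_mul_le_mul_log_one_add (rpow_nonneg ht0.le a) hc.le
    _ ≤ c * log (1 + t) ^ a := by
        gcongr
        exact log_one_add_rpow_le_rpow_log_one_add ht0 ht1.le ha0.le ha1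
end

section
/- Let 0 < a ≤ 1 ≤ b and φ(t) = max{t^a, t^b}. Then for all s, t > 0: 2^(1−b) ≤ (φ(s) + φ(t))/φ(s+t) ≤ 2^(1−a). -/
/-!
Both bounds come from the two-point power mean inequalities
`2 ^ (1 - p) (x + y) ^ p ≤ x ^ p + y ^ p` for `p ≥ 1` (convexity) and
`x ^ p + y ^ p ≤ 2 ^ (1 - p) (x + y) ^ p` for `p ≤ 1` (concavity).
For the lower bound, `φ (s + t)` equals `(s + t) ^ p` for some `p ∈ {a, b}`.
For the upper bound, write `φ x = x ^ a * max 1 (x ^ (b - a))`: the second factor is monotone,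
so it can be replaced by its value at `s + t` for both `s` and `t`.
-/

open Real

lemma two_mul_half_add_rpow {x y : ℝ} (hxy : 0 ≤ x + y) (p : ℝ) :
    2 * ((x + y) / 2) ^ p = 2 ^ (1 - p) * (x + y) ^ p := by
  rw [div_rpow hxy zero_le_two, rpow_sub zero_lt_two, rpow_one]
  ring

lemma two_rpow_one_sub_mul_add_rpow_le {x y p : ℝ} (hx : 0 ≤ x) (hy : 0 ≤ y) (hp : 1 ≤ p) :
    2 ^ (1 - p) * (x + y) ^ p ≤ x ^ p + y ^ p := by
  have h := (convexOn_rpow hp).2 (Set.mem_Ici.2 hx) (Set.mem_Ici.2 hy)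
    (by norm_num : (0 : ℝ) ≤ 1 / 2) (by norm_num : (0 : ℝ) ≤ 1 / 2) (add_halves 1)
  simp only [smul_eq_mul] at h
  rw [← two_mul_half_add_rpow (add_nonneg hx hy),
    show (x + y) / 2 = 1 / 2 * x + 1 / 2 * y by ring]
  linarith

lemma add_rpow_le_two_rpow_one_sub_mul {x y p : ℝ} (hx : 0 ≤ x) (hy : 0 ≤ y) (hp₀ : 0 ≤ p)
    (hp₁ : p ≤ 1) : x ^ p + y ^ p ≤ 2 ^ (1 - p) * (x + y) ^ p := by
  have h := (concaveOn_rpow hp₀ hp₁).2 (Set.mem_Ici.2 hx) (Set.mem_Ici.2 hy)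
    (by norm_num : (0 : ℝ) ≤ 1 / 2) (by norm_num : (0 : ℝ) ≤ 1 / 2) (add_halves 1)
  simp only [smul_eq_mul] at h
  rw [← two_mul_half_add_rpow (add_nonneg hx hy),
    show (x + y) / 2 = 1 / 2 * x + 1 / 2 * y by ring]
  linarith

lemma two_rpow_one_sub_mul_add_rpow_le_of_le {x y p q : ℝ} (hx : 0 ≤ x) (hy : 0 ≤ y)
    (hp : 0 ≤ p) (hpq : p ≤ q) (hq : 1 ≤ q) :
    2 ^ (1 - q) * (x + y) ^ p ≤ x ^ p + y ^ p := by
  rcases le_total p 1 with hp₁ | hp₁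
  · calc 2 ^ (1 - q) * (x + y) ^ p ≤ 1 * (x + y) ^ p := by
          gcongr
          exact rpow_le_one_of_one_le_of_nonpos one_le_two (by linarith)
      _ ≤ x ^ p + y ^ p := (one_mul _).trans_le (rpow_add_le_add_rpow hx hy hp hp₁)
  · calc 2 ^ (1 - q) * (x + y) ^ p ≤ 2 ^ (1 - p) * (x + y) ^ p := by
          gcongr
          exact one_le_two
      _ ≤ x ^ p + y ^ p := two_rpow_one_sub_mul_add_rpow_le hx hy hp₁

lemma two_rpow_one_sub_mul_max_rpow_le {x y a b : ℝ} (hx : 0 ≤ x) (hy : 0 ≤ y) (ha : 0 ≤ a)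
    (hab : a ≤ b) (hb : 1 ≤ b) :
    2 ^ (1 - b) * max ((x + y) ^ a) ((x + y) ^ b) ≤
      max (x ^ a) (x ^ b) + max (y ^ a) (y ^ b) := by
  rcases max_choice ((x + y) ^ a) ((x + y) ^ b) with h | h <;> rw [h]
  · exact (two_rpow_one_sub_mul_add_rpow_le_of_le hx hy ha hab hb).trans
      (add_le_add (le_max_left _ _) (le_max_left _ _))
  · exact (two_rpow_one_sub_mul_add_rpow_le_of_le hx hy (ha.trans hab) le_rfl hb).trans
      (add_le_add (le_max_right _ _) (le_max_right _ _))

lemma max_rpow_eq_rpow_mul_max_one {x : ℝ} (hx : 0 < x) (a b : ℝ) :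
    max (x ^ a) (x ^ b) = x ^ a * max 1 (x ^ (b - a)) := by
  rw [mul_max_of_nonneg _ _ (rpow_nonneg hx.le a), mul_one, ← rpow_add hx, add_sub_cancel]

lemma max_rpow_le_rpow_mul_max_one {x y a b : ℝ} (hx : 0 < x) (hxy : x ≤ y) (hab : a ≤ b) :
    max (x ^ a) (x ^ b) ≤ x ^ a * max 1 (y ^ (b - a)) := by
  rw [max_rpow_eq_rpow_mul_max_one hx]
  gcongr

lemma max_rpow_add_le_two_rpow_one_sub_mul {x y a b : ℝ} (hx : 0 < x) (hy : 0 < y) (ha : 0 ≤ a)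
    (ha₁ : a ≤ 1) (hab : a ≤ b) :
    max (x ^ a) (x ^ b) + max (y ^ a) (y ^ b) ≤
      2 ^ (1 - a) * max ((x + y) ^ a) ((x + y) ^ b) := by
  have hxy : 0 < x + y := add_pos hx hy
  calc max (x ^ a) (x ^ b) + max (y ^ a) (y ^ b)
      ≤ x ^ a * max 1 ((x + y) ^ (b - a)) + y ^ a * max 1 ((x + y) ^ (b - a)) :=
        add_le_add (max_rpow_le_rpow_mul_max_one hx (by linarith) hab)
          (max_rpow_le_rpow_mul_max_one hy (by linarith) hab)
    _ = (x ^ a + y ^ a) * max 1 ((x + y) ^ (b - a)) := by ring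
    _ ≤ 2 ^ (1 - a) * (x + y) ^ a * max 1 ((x + y) ^ (b - a)) := by
        gcongr
        exact add_rpow_le_two_rpow_one_sub_mul hx.le hy.le ha ha₁
    _ = 2 ^ (1 - a) * max ((x + y) ^ a) ((x + y) ^ b) := by
        rw [max_rpow_eq_rpow_mul_max_one hxy, mul_assoc]

theorem stmt_14 (a b : ℝ) (ha0 : 0 < a) (ha1 : a ≤ 1) (hb : 1 ≤ b)
    (φ : ℝ → ℝ) (hφ : ∀ t : ℝ, φ t = max (t ^ a) (t ^ b)) :
    ∀ s t : ℝ, 0 < s → 0 < t →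
      (2 : ℝ) ^ (1 - b) ≤ (φ s + φ t) / φ (s + t) ∧
      (φ s + φ t) / φ (s + t) ≤ (2 : ℝ) ^ (1 - a) := by
  intro s t hs ht
  have hab : a ≤ b := ha1.trans hb
  have hφ_pos : 0 < φ (s + t) :=
    (hφ _).symm ▸ lt_max_of_lt_left (rpow_pos_of_pos (add_pos hs ht) a)
  rw [le_div_iff₀ hφ_pos, div_le_iff₀ hφ_pos, hφ, hφ, hφ]
  exact ⟨two_rpow_one_sub_mul_max_rpow_le hs.le ht.le ha0.le hab hb,
    max_rpow_add_le_two_rpow_one_sub_mul hs ht ha0.le ha1 hab⟩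
end

section
/- For 0 < a < b < 1, the function f(t) = (b^t − a^t)/t is decreasing on (0, ∞). -/
/-! Since `(b ^ t - a ^ t) / t = ∫ x in a..b, x ^ (t - 1)`, it suffices that the integrand decreases
in the exponent, which holds pointwise because `[a, b] ⊆ (0, 1]`. -/

open intervalIntegral Set

lemma rpow_sub_rpow_div_eq_integral (a b : ℝ) {u : ℝ} (hu : 0 < u) :
    (b ^ u - a ^ u) / u = ∫ x in a..b, x ^ (u - 1) := by
  rw [integral_rpow (Or.inl (by linarith)), sub_add_cancel]

lemma strictAnti_integral_rpow {a b : ℝ} (ha : 0 < a) (hab : a < b) (hb : b ≤ 1) :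
    StrictAnti (fun r : ℝ => ∫ x in a..b, x ^ r) := by
  intro r s hrs
  have hcont (p : ℝ) : ContinuousOn (fun x : ℝ => x ^ p) (Icc a b) :=
    continuousOn_id.rpow_const fun x hx => Or.inl (ha.trans_le hx.1).ne'
  refine integral_lt_integral_of_continuousOn_of_le_of_exists_lt hab (hcont s) (hcont r) ?_ ?_
  · exact fun x hx => Real.rpow_le_rpow_of_exponent_ge (ha.trans hx.1) (hx.2.trans hb) hrs.le
  · exact ⟨a, left_mem_Icc.2 hab.le,
      Real.rpow_lt_rpow_of_exponent_gt ha (hab.trans_le hb) hrs⟩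

theorem stmt_15 (a b : ℝ) (ha : 0 < a) (hab : a < b) (hb : b < 1) :
    StrictAntiOn (fun t : ℝ => (b ^ t - a ^ t) / t) (Set.Ioi (0 : ℝ)) := by
  intro s hs t ht hst
  simp only [rpow_sub_rpow_div_eq_integral a b hs, rpow_sub_rpow_div_eq_integral a b ht]
  exact strictAnti_integral_rpow ha hab hb.le (sub_lt_sub_right hst 1)
end

section
/- For a > 0, the function f(t) = t·log((1 + a/t)/(1 − a/t)) is decreasing on (a, ∞). -/
/-! Since `(1 + a/t)/(1 - a/t) = x` with `x = (t + a)/(t - a) > 1`, the derivative of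
`t * log x` in `t` is `log x - (x - x⁻¹)/2 = log x - sinh (log x)`, which is negative because
`u < sinh u` for `u > 0`. -/

open Real Set

lemma Real.log_lt_sub_inv_div_two {x : ℝ} (hx : 1 < x) : log x < (x - x⁻¹) / 2 := by
  rw [← sinh_log (by positivity)]
  exact self_lt_sinh_iff.mpr (log_pos hx)

lemma Real.log_add_div_sub_lt {a t : ℝ} (ha : 0 < a) (ht : a < t) :
    log ((t + a) / (t - a)) < 2 * a * t / ((t + a) * (t - a)) := by
  have hm : 0 < t - a := sub_pos.mpr ht
  have hx : 1 < (t + a) / (t - a) := (one_lt_div hm).mpr (by linarith)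
  have hx_sub_inv :
      ((t + a) / (t - a) - ((t + a) / (t - a))⁻¹) / 2 = 2 * a * t / ((t + a) * (t - a)) := by
    have hp : t + a ≠ 0 := by linarith
    field_simp
    ring
  exact hx_sub_inv ▸ log_lt_sub_inv_div_two hx

lemma one_add_div_div_one_sub_div {a t : ℝ} (ht : t ≠ 0) :
    (1 + a / t) / (1 - a / t) = (t + a) / (t - a) := by
  rw [one_add_div ht, one_sub_div ht, div_div_div_cancel_right₀ ht]

lemma hasDerivAt_mul_log_add_div_sub {a t : ℝ} (hp : t + a ≠ 0) (hm : t - a ≠ 0) :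
    HasDerivAt (fun s => s * log ((s + a) / (s - a)))
      (log ((t + a) / (t - a)) - 2 * a * t / ((t + a) * (t - a))) t := by
  have hq : HasDerivAt (fun s => (s + a) / (s - a)) (-(2 * a) / (t - a) ^ 2) t :=
    (((hasDerivAt_id' t).add_const a).fun_div ((hasDerivAt_id' t).sub_const a) hm).congr_deriv
      (by ring)
  refine ((hasDerivAt_id' t).fun_mul (hq.log (div_ne_zero hp hm))).congr_deriv ?_
  field_simp
  ring

lemma strictAntiOn_mul_log_add_div_sub {a : ℝ} (ha : 0 < a) :
    StrictAntiOn (fun t => t * log ((t + a) / (t - a))) (Ioi a) := by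
  have hderiv (t : ℝ) (ht : t ∈ Ioi a) := hasDerivAt_mul_log_add_div_sub
    (by linarith [mem_Ioi.mp ht] : 0 < t + a).ne' (sub_pos.mpr ht).ne'
  refine strictAntiOn_of_hasDerivWithinAt_neg (convex_Ioi a)
    (f' := fun t => log ((t + a) / (t - a)) - 2 * a * t / ((t + a) * (t - a)))
    (fun t ht => (hderiv t ht).continuousAt.continuousWithinAt) ?_ ?_ <;> rw [interior_Ioi]
  · exact fun t ht => (hderiv t ht).hasDerivWithinAt
  · exact fun t ht => sub_neg.mpr (log_add_div_sub_lt ha ht)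

theorem stmt_16 (a : ℝ) (ha : 0 < a) :
    StrictAntiOn (fun t : ℝ => t * Real.log ((1 + a / t) / (1 - a / t)))
      (Set.Ioi a) := by
  refine (strictAntiOn_mul_log_add_div_sub ha).congr fun t ht => ?_
  simp only [one_add_div_div_one_sub_div (ha.trans ht).ne']
end
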